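/- Let c be bounded by c_max and strictly positive. Let 𝛃⁺ be a path of length K⁺ and 𝛃⁻ a path of length K⁻ with K⁻ > K⁺. Then for γ ≥ 1, L_γ(𝛃⁻) − L_γ(𝛃⁺) ≥ γ^{K⁺} ( γ·c(β⁻_{K⁻}) − c(β⁺_{K⁺}) − c_max · Σ_{k=1}^{K⁺−1} γ^{k−K⁺} ), where L_γ(𝛃) = Σ_{k=1}^{|𝛃|} γ^k c(β_k). In particular L_γ(𝛃⁻) − L_γ(𝛃⁺) → +∞ as γ → ∞. -/

import Mathlib

/-!
Since `c > 0`, the longer path's loss is at least its last term,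
`γ ^ K⁻ c(β⁻_{K⁻}) ≥ γ ^ (K⁺ + 1) c(β⁻_{K⁻})`. The shorter path's loss is at most its last term plus `c_max` times the geometric weights of
its earlier steps. For `γ ≥ 1` each normalised weight `γ ^ (k - K⁺)` is at most `1`, so the gap
is at least `γ ^ K⁺ (γ c(β⁻_{K⁻}) - C)` for a constant `C`, which tends to infinity.
-/

open Finset Filter

/-- Number of coordinates in which two vectors differ (the ℓ₀ "norm" of their difference). -/
noncomputable def diffCount {d : ℕ} (x y : Fin d → ℝ) : ℕ :=
  (Finset.univ.filter (fun i => x i ≠ y i)).card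

/-- A coordinate path of length `K`: starts at `0`, each step changes at most one coordinate. -/
def IsPath {d : ℕ} (K : ℕ) (p : ℕ → Fin d → ℝ) : Prop :=
  p 0 = 0 ∧ ∀ k, 1 ≤ k → k ≤ K → diffCount (p (k - 1)) (p k) ≤ 1

/-- Number of nonzero coordinates of a vector (‖β‖₀). -/
noncomputable def sparsity {d : ℕ} (β : Fin d → ℝ) : ℕ :=
  (Finset.univ.filter (fun i => β i ≠ 0)).card

/-- The cost sequence of a path of length `K`. -/
def costSeq {d : ℕ} (c : (Fin d → ℝ) → ℝ) (K : ℕ) (p : ℕ → Fin d → ℝ) : ℕ → ℝ :=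
  fun k => if 1 ≤ k ∧ k ≤ K then c (p k) else 0

/-- Geometric-weighted interpretability loss of a path of length `K`. -/
noncomputable def pathLoss {d : ℕ} (c : (Fin d → ℝ) → ℝ) (γ : ℝ) (K : ℕ)
    (p : ℕ → Fin d → ℝ) : ℝ :=
  ∑ k ∈ Finset.Icc 1 K, γ ^ k * c (p k)

/-- Model interpretability: infimum of the path loss over all explanations of `β`. -/
noncomputable def modelLoss {d : ℕ} (c : (Fin d → ℝ) → ℝ) (γ : ℝ) (β : Fin d → ℝ) : ℝ :=
  sInf {v : ℝ | ∃ K p, IsPath K p ∧ p K = β ∧ v = pathLoss c γ K p}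

section PathLoss

variable {d : ℕ} (c : (Fin d → ℝ) → ℝ) (γ : ℝ) (p : ℕ → Fin d → ℝ)

theorem pathLoss_zero : pathLoss c γ 0 p = 0 := by
  simp [pathLoss]

theorem pathLoss_succ (K : ℕ) :
    pathLoss c γ (K + 1) p = pathLoss c γ K p + γ ^ (K + 1) * c (p (K + 1)) := by
  rw [pathLoss, pathLoss, Finset.sum_Icc_succ_top (by omega)]

variable {c γ}

theorem pow_mul_le_pathLoss {m K : ℕ} (hc : ∀ x, 0 ≤ c x) (hγ : 1 ≤ γ) (hm : m ≤ K)
    (hK : 1 ≤ K) : γ ^ m * c (p K) ≤ pathLoss c γ K p :=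
  calc γ ^ m * c (p K) ≤ γ ^ K * c (p K) := by gcongr; exact hc _
    _ ≤ pathLoss c γ K p :=
      Finset.single_le_sum (f := fun k => γ ^ k * c (p k))
        (fun k _ => mul_nonneg (by positivity) (hc _)) (by simp [hK])

theorem pathLoss_le_mul_sum_pow {cmax : ℝ} (hc : ∀ x, c x ≤ cmax) (hγ : 0 ≤ γ) (K : ℕ) :
    pathLoss c γ K p ≤ cmax * ∑ k ∈ Icc 1 K, γ ^ k := by
  rw [Finset.mul_sum, pathLoss]
  refine Finset.sum_le_sum fun k _ => ?_
  rw [mul_comm cmax]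
  exact mul_le_mul_of_nonneg_left (hc _) (by positivity)

theorem pathLoss_le_last_add {cmax : ℝ} (hc₀ : ∀ x, 0 ≤ c x) (hc : ∀ x, c x ≤ cmax)
    (hγ : 0 ≤ γ) (K : ℕ) :
    pathLoss c γ K p ≤ γ ^ K * c (p K) + cmax * ∑ k ∈ Icc 1 (K - 1), γ ^ k := by
  cases K with
  | zero => simpa [pathLoss_zero] using hc₀ (p 0)
  | succ K =>
    rw [pathLoss_succ, Nat.add_sub_cancel]
    linarith [pathLoss_le_mul_sum_pow p hc hγ K]

end PathLoss

theorem sum_Icc_pow_div_pow_le {γ : ℝ} (hγ : 1 ≤ γ) (K : ℕ) :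
    ∑ k ∈ Icc 1 (K - 1), γ ^ k / γ ^ K ≤ K :=
  calc ∑ k ∈ Icc 1 (K - 1), γ ^ k / γ ^ K
      ≤ ∑ _k ∈ Icc 1 (K - 1), (1 : ℝ) := by
        gcongr with k hk
        rw [div_le_one (by positivity)]
        exact pow_le_pow_right₀ hγ (by simp at hk; omega)
    _ ≤ K := by simp

theorem pathLoss_sub_pathLoss_ge {d : ℕ} {c : (Fin d → ℝ) → ℝ} {cmax γ : ℝ}
    (hc₀ : ∀ x, 0 ≤ c x) (hc : ∀ x, c x ≤ cmax) {Kp Km : ℕ} (pp pm : ℕ → Fin d → ℝ)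
    (hK : Kp < Km) (hγ : 1 ≤ γ) :
    γ ^ Kp * (γ * c (pm Km) - c (pp Kp) - cmax * ∑ k ∈ Icc 1 (Kp - 1), γ ^ k / γ ^ Kp)
      ≤ pathLoss c γ Km pm - pathLoss c γ Kp pp := by
  have hlong := pow_mul_le_pathLoss (m := Kp + 1) pm hc₀ hγ hK (by omega)
  have hshort := pathLoss_le_last_add pp hc₀ hc (zero_le_one.trans hγ) Kp
  have hγKp : γ ^ Kp ≠ 0 := by positivity
  have hexpand : γ ^ Kp * (γ * c (pm Km) - c (pp Kp)
        - cmax * ∑ k ∈ Icc 1 (Kp - 1), γ ^ k / γ ^ Kp)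
      = γ ^ (Kp + 1) * c (pm Km) - γ ^ Kp * c (pp Kp)
        - cmax * ∑ k ∈ Icc 1 (Kp - 1), γ ^ k := by
    rw [← Finset.sum_div]
    field_simp
    ring
  linarith

theorem tendsto_pow_mul_mul_sub_atTop {a : ℝ} (ha : 0 < a) (C : ℝ) (n : ℕ) :
    Tendsto (fun γ : ℝ => γ ^ n * (γ * a - C)) atTop atTop := by
  have hlin : Tendsto (fun γ : ℝ => γ * a - C) atTop atTop :=
    tendsto_atTop_add_const_right _ _ (tendsto_id.atTop_mul_const ha)
  refine tendsto_atTop_mono' atTop ?_ hlin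
  filter_upwards [eventually_ge_atTop 1, hlin.eventually_ge_atTop 0] with γ hγ hpos
  exact le_mul_of_one_le_left hpos (one_le_pow₀ hγ)

/-- Lower bound on the loss gap between a longer and a shorter path, and divergence
of the gap as γ → ∞. -/
theorem stmt5 {d : ℕ} (c : (Fin d → ℝ) → ℝ) (cmax : ℝ)
    (hc : ∀ x, 0 < c x ∧ c x ≤ cmax)
    (Kp Km : ℕ) (pp pm : ℕ → Fin d → ℝ) (hK : Kp < Km) :
    (∀ γ : ℝ, 1 ≤ γ →
      γ ^ Kp * (γ * c (pm Km) - c (pp Kp)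
          - cmax * ∑ k ∈ Finset.Icc 1 (Kp - 1), γ ^ k / γ ^ Kp)
        ≤ pathLoss c γ Km pm - pathLoss c γ Kp pp) ∧
    Filter.Tendsto (fun γ : ℝ => pathLoss c γ Km pm - pathLoss c γ Kp pp)
      Filter.atTop Filter.atTop := by
  have hc₀ : ∀ x, 0 ≤ c x := fun x => (hc x).1.le
  have hcmax : 0 ≤ cmax := hc₀ 0 |>.trans (hc 0).2
  have hgap := fun γ (hγ : 1 ≤ γ) =>
    pathLoss_sub_pathLoss_ge hc₀ (fun x => (hc x).2) pp pm hK hγ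
  refine ⟨hgap, tendsto_atTop_mono' atTop ?_
    (tendsto_pow_mul_mul_sub_atTop (hc (pm Km)).1 (c (pp Kp) + cmax * Kp) Kp)⟩
  filter_upwards [eventually_ge_atTop 1] with γ hγ
  refine le_trans ?_ (hgap γ hγ)
  rw [← sub_sub]
  gcongr
  exact sum_Icc_pow_div_pow_le hγ Kp
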